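/- Let n = m and f: ℝⁿ → ℝⁿ be measurable such that ap-limsup_{y→x} |f(y)-f(x)|/|y-x| < ∞ for all x outside a countable set N₀. Then f is approximately differentiable (of order 1) Lⁿ-almost everywhere, and the image under f of its approximate critical set C_f = {x : F₁(x) defined and det F₁(x) = 0} has Lebesgue measure zero. -/

import Mathlib

open MeasureTheory Metric Filter Set

noncomputable section

/-- `ℝⁿ` as a Euclidean space. -/
abbrev Ec (n : ℕ) := EuclideanSpace ℝ (Fin n)

/-- The set `A` has vanishing Lebesgue density at `x`. -/
def apSmall {n : ℕ} (x : Ec n) (A : Set (Ec n)) : Prop :=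
  Tendsto (fun r : ℝ => volume (A ∩ ball x r) / volume (ball x r))
    (nhdsWithin 0 (Ioi 0)) (nhds 0)

/-- `f` is approximately differentiable of order `k` at `x`, with Taylor polynomial
`y ↦ ∑_{j ≤ k} (p j) (y-x)^j = p.partialSum (k+1) (y-x)` (here the coefficient maps `p j`
already incorporate the factor `1/j!`): the approximate limit of
`|f y - p_k(x;y)|/|y-x|^k` as `y → x` is `0`. -/
def IsApproxTaylor {n m : ℕ} (f : Ec n → Ec m) (k : ℕ) (x : Ec n)
    (p : FormalMultilinearSeries ℝ (Ec n) (Ec m)) : Prop :=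
  ∀ ε > (0 : ℝ),
    apSmall x {y | y ≠ x ∧ ε * ‖y - x‖ ^ k ≤ ‖f y - p.partialSum (k + 1) (y - x)‖}
/-- `f` is approximately differentiable (of order 1) at `x` with approximate derivative `L`. -/
def ApproxDiff1 {n m : ℕ} (f : Ec n → Ec m) (x : Ec n) (L : Ec n →L[ℝ] Ec m) : Prop :=
  ∀ ε > (0 : ℝ), apSmall x {y | y ≠ x ∧ ε * ‖y - x‖ ≤ ‖f y - f x - L (y - x)‖}


/-!
If the approximate upper Lipschitz constant of `f` at `x` is finite, then for some `k` the points
`y` with `|y - x| < q` and `|f y - f x| > (k + 1) |y - x|` fill, at every scale `q < 1 / (k + 1)`,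
less than half the volume of a ball of radius `q / 2`. For two such points `x`, `z` at distance
`ρ < q < 2ρ`, the ball of radius `q / 2` around their midpoint therefore contains a point `y` that
is steep for neither, whence `|f x - f z| ≤ 4 (k + 1) ρ`. Hence, up to a null set, the space is
covered by countably many measurable pieces on each of which `f` is Lipschitz. By Rademacher's
theorem `f` is differentiable relative to each piece at almost every point of it, and at a density
point of the piece this relative derivative is an approximate derivative. The image of the points
where its determinant vanishes is null by the Sard-type estimate for maps with degenerate
derivative.
-/

open scoped ENNReal NNReal

section

variable {n m : ℕ}

lemma apSmall.mono_of_inter_ball {x : Ec n} {A B : Set (Ec n)} (hB : apSmall x B) {r : ℝ}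
    (hr : 0 < r) (hAB : A ∩ ball x r ⊆ B) : apSmall x A := by
  refine tendsto_of_tendsto_of_tendsto_of_le_of_le' tendsto_const_nhds hB
    (Eventually.of_forall fun _ => zero_le) ?_
  filter_upwards [Ioo_mem_nhdsGT hr] with s hs
  exact ENNReal.div_le_div_right (measure_mono (subset_inter
    (fun y hy => hAB ⟨hy.1, ball_subset_ball hs.2.le hy.2⟩) inter_subset_right)) _

lemma ae_apSmall_of_notMem {A : Set (Ec n)} (hA : MeasurableSet A) :
    ∀ᵐ x, x ∉ A → apSmall x A := by
  filter_upwards [Besicovitch.ae_tendsto_measure_inter_div_of_measurableSet volume hA]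
    with x hx hxA
  rw [indicator_of_notMem hxA] at hx
  refine tendsto_of_tendsto_of_tendsto_of_le_of_le' tendsto_const_nhds hx
    (Eventually.of_forall fun _ => zero_le) ?_
  filter_upwards [self_mem_nhdsWithin] with r (hr : 0 < r)
  have hvol : volume (closedBall x r) = volume (ball x r) := by
    rw [Measure.addHaar_closedBall volume x hr.le, Measure.addHaar_ball_of_pos volume x hr]
  rw [hvol]
  exact ENNReal.div_le_div_right
    (measure_mono (inter_subset_inter_right _ ball_subset_closedBall)) _

lemma approxDiff1_of_hasFDerivWithinAt {f : Ec n → Ec m} {S : Set (Ec n)} {x : Ec n}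
    {L : Ec n →L[ℝ] Ec m} (hf : HasFDerivWithinAt f L S x) (hx : apSmall x Sᶜ) :
    ApproxDiff1 f x L := by
  intro ε hε
  obtain ⟨r, hr, hbound⟩ := Metric.mem_nhdsWithin_iff.1 (hf.isLittleO.bound (half_pos hε))
  refine hx.mono_of_inter_ball hr fun y ⟨⟨hyx, hy⟩, hyr⟩ hyS => ?_
  have hpos : 0 < ‖y - x‖ := norm_pos_iff.2 (sub_ne_zero.2 hyx)
  have hsmall : ‖f y - f x - L (y - x)‖ ≤ ε / 2 * ‖y - x‖ := hbound ⟨hyr, hyS⟩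
  nlinarith

/-- `ap-limsup_{y → x} |f y - f x| / |y - x| < ∞`. -/
def ApproxLipschitzAt (f : Ec n → Ec m) (x : Ec n) : Prop :=
  ∃ lam : ℝ, apSmall x {y | y ≠ x ∧ lam * ‖y - x‖ ≤ ‖f y - f x‖}

def steepSet (f : Ec n → Ec m) (c : ℝ) (x : Ec n) : Set (Ec n) :=
  {y | c * ‖y - x‖ < ‖f y - f x‖}

/-- Rational radii keep this set measurable. -/
def sparseSteep (f : Ec n → Ec m) (k : ℕ) : Set (Ec n) :=
  {x | ∀ q : ℚ, 0 < (q : ℝ) → (q : ℝ) < 1 / (k + 1) →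
    volume (steepSet f (k + 1) x ∩ ball x q) < volume (ball (0 : Ec n) (q / 2)) / 2}

lemma measurable_volume_steepSet_inter_ball {f : Ec n → Ec m} (hf : Measurable f) (c r : ℝ) :
    Measurable fun x => volume (steepSet f c x ∩ ball x r) := by
  have hmeas : MeasurableSet ({p : Ec n × Ec n | c * ‖p.2 - p.1‖ < ‖f p.2 - f p.1‖} ∩
      {p | dist p.2 p.1 < r}) :=
    (measurableSet_lt (by fun_prop) (by fun_prop)).inter
      (measurableSet_lt (by fun_prop) measurable_const)
  exact measurable_measure_prodMk_left hmeas

lemma measurableSet_sparseSteep {f : Ec n → Ec m} (hf : Measurable f) (k : ℕ) :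
    MeasurableSet (sparseSteep f k) := by
  refine Measurable.setOf (Measurable.forall fun q => measurable_const.imp
    (measurable_const.imp ?_))
  exact (measurableSet_lt (measurable_volume_steepSet_inter_ball hf _ _) measurable_const).mem

lemma exists_mem_sparseSteep {f : Ec n → Ec m} {x : Ec n} (hx : ApproxLipschitzAt f x) :
    ∃ k : ℕ, x ∈ sparseSteep f k := by
  obtain ⟨lam, hx⟩ := hx
  set κ : ℝ≥0∞ := ENNReal.ofReal (2⁻¹ ^ n)
  have hκ0 : 0 < κ / 2 := ENNReal.half_pos (by positivity)
  obtain ⟨r, hr, hsmall⟩ := Metric.mem_nhdsWithin_iff.1 (hx.eventually (gt_mem_nhds hκ0))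
  obtain ⟨k, hk⟩ := exists_nat_gt (max lam (1 / r))
  have hlam : lam ≤ k + 1 := by linarith [le_max_left lam (1 / r)]
  have hkr : 1 / ((k : ℝ) + 1) < r := by
    rw [div_lt_iff₀ (by positivity)]
    have := (le_max_right lam (1 / r)).trans_lt hk
    rw [div_lt_iff₀ hr] at this
    linarith
  refine ⟨k, fun q hq hqk => ?_⟩
  have hsteep : steepSet f (k + 1) x ⊆ {y | y ≠ x ∧ lam * ‖y - x‖ ≤ ‖f y - f x‖} := by
    intro y hy
    change (k + 1 : ℝ) * ‖y - x‖ < ‖f y - f x‖ at hy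
    refine ⟨fun hyx => by simp [hyx] at hy, ?_⟩
    nlinarith [norm_nonneg (y - x)]
  have hqr : (q : ℝ) ∈ ball 0 r ∩ Ioi 0 :=
    ⟨by rw [mem_ball_zero_iff, Real.norm_of_nonneg hq.le]; exact hqk.trans hkr, hq⟩
  have hball : volume (ball (0 : Ec n) (q / 2)) = κ * volume (ball x q) := by
    rw [div_eq_inv_mul, Measure.addHaar_ball_mul_of_pos volume 0 (by norm_num),
      finrank_euclideanSpace_fin, Measure.addHaar_ball_center volume x]
  calc volume (steepSet f (k + 1) x ∩ ball x q)
      ≤ volume ({y | y ≠ x ∧ lam * ‖y - x‖ ≤ ‖f y - f x‖} ∩ ball x q) :=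
        measure_mono (inter_subset_inter_left _ hsteep)
    _ < κ / 2 * volume (ball x q) :=
        (ENNReal.div_lt_iff (Or.inl (measure_ball_pos volume x hq).ne')
          (Or.inl measure_ball_lt_top.ne)).1 (hsmall hqr)
    _ = volume (ball (0 : Ec n) (q / 2)) / 2 := by
        rw [hball, ENNReal.mul_div_right_comm]

lemma exists_not_steep_of_mem_sparseSteep {f : Ec n → Ec m} {k : ℕ} {x z : Ec n}
    (hx : x ∈ sparseSteep f k) (hz : z ∈ sparseSteep f k) {q : ℚ} (hqk : (q : ℝ) < 1 / (k + 1))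
    (hxz : dist x z < q) :
    ∃ y ∈ ball x q ∩ ball z q, y ∉ steepSet f (k + 1) x ∧ y ∉ steepSet f (k + 1) z := by
  have hq : 0 < (q : ℝ) := dist_nonneg.trans_lt hxz
  set W := ball (midpoint ℝ x z) (q / 2)
  have hWx : W ⊆ ball x q := ball_subset_ball' (by
    rw [dist_midpoint_left]; norm_num; linarith)
  have hWz : W ⊆ ball z q := ball_subset_ball' (by
    rw [dist_midpoint_right]; norm_num; linarith [dist_comm x z])
  have hcover : ¬ W ⊆ (steepSet f (k + 1) x ∩ ball x q) ∪ (steepSet f (k + 1) z ∩ ball z q) := by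
    intro hW
    have hlt : volume W < volume W := calc
      volume W ≤ volume (steepSet f (k + 1) x ∩ ball x q) +
          volume (steepSet f (k + 1) z ∩ ball z q) :=
        (measure_mono hW).trans (measure_union_le _ _)
      _ < volume (ball (0 : Ec n) (q / 2)) / 2 + volume (ball (0 : Ec n) (q / 2)) / 2 :=
        ENNReal.add_lt_add (hx q hq hqk) (hz q hq hqk)
      _ = volume W := by rw [ENNReal.add_halves]; exact (Measure.addHaar_ball_center _ _ _).symm
    exact hlt.false
  obtain ⟨y, hyW, hy⟩ := not_subset.1 hcover
  exact ⟨y, ⟨hWx hyW, hWz hyW⟩, fun h => hy (Or.inl ⟨h, hWx hyW⟩),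
    fun h => hy (Or.inr ⟨h, hWz hyW⟩)⟩

lemma dist_le_of_mem_sparseSteep {f : Ec n → Ec m} {k : ℕ} {x z : Ec n}
    (hx : x ∈ sparseSteep f k) (hz : z ∈ sparseSteep f k) (hxz : dist x z < 1 / (k + 1)) :
    dist (f x) (f z) ≤ 4 * (k + 1) * dist x z := by
  rcases eq_or_ne x z with rfl | hne
  · simp
  have hρ : 0 < dist x z := dist_pos.2 hne
  obtain ⟨q, hq, hq'⟩ := exists_rat_btwn (lt_min (lt_two_mul_self hρ) hxz)
  obtain ⟨y, ⟨hyx, hyz⟩, hfx, hfz⟩ :=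
    exists_not_steep_of_mem_sparseSteep hx hz (hq'.trans_le (min_le_right _ _)) hq
  simp only [steepSet, mem_ofPred_eq, not_lt, ← dist_eq_norm] at hfx hfz
  rw [mem_ball] at hyx hyz
  have hq2 : (q : ℝ) < 2 * dist x z := hq'.trans_le (min_le_left _ _)
  calc dist (f x) (f z) ≤ dist (f y) (f x) + dist (f y) (f z) := dist_triangle_left _ _ _
    _ ≤ (k + 1) * dist y x + (k + 1) * dist y z := add_le_add hfx hfz
    _ ≤ 4 * (k + 1) * dist x z := by nlinarith

lemma lipschitzOnWith_sparseSteep_inter_ball (f : Ec n → Ec m) (k : ℕ) (c : Ec n) :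
    LipschitzOnWith (4 * (k + 1)) f (sparseSteep f k ∩ ball c (1 / (2 * (k + 1)))) := by
  refine LipschitzOnWith.of_dist_le_mul fun x hx z hz => ?_
  have hxz : dist x z < 1 / (k + 1) := calc
    dist x z ≤ dist x c + dist z c := dist_triangle_right _ _ _
    _ < 1 / (2 * (k + 1)) + 1 / (2 * (k + 1)) := add_lt_add hx.2 hz.2
    _ = 1 / (k + 1) := by field_simp; ring
  simpa using dist_le_of_mem_sparseSteep hx.1 hz.1 hxz

lemma exists_measurableSet_lipschitzOnWith_cover {f : Ec n → Ec m} (hf : Measurable f) :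
    ∃ S : ℕ × ℕ → Set (Ec n), (∀ i, MeasurableSet (S i)) ∧
      (∀ i, ∃ K, LipschitzOnWith K f (S i)) ∧
      ∀ x, ApproxLipschitzAt f x → ∃ i, x ∈ S i := by
  refine ⟨fun i => sparseSteep f i.1 ∩ ball (TopologicalSpace.denseSeq (Ec n) i.2)
      (1 / (2 * (i.1 + 1))),
    fun i => (measurableSet_sparseSteep hf _).inter measurableSet_ball,
    fun i => ⟨_, lipschitzOnWith_sparseSteep_inter_ball f _ _⟩, fun x hx => ?_⟩
  obtain ⟨k, hk⟩ := exists_mem_sparseSteep hx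
  obtain ⟨j, hj⟩ := Metric.denseRange_iff.1 (TopologicalSpace.denseRange_denseSeq (Ec n)) x
    (1 / (2 * (k + 1))) (by positivity)
  exact ⟨(k, j), hk, hj⟩

/-- Countable sets are null only in positive dimension; in dimension `0` every point is
approximately Lipschitz vacuously. -/
lemma exists_null_forall_notMem_approxLipschitzAt {f : Ec n → Ec m} {N₀ : Set (Ec n)}
    (hN₀ : N₀.Countable) (h : ∀ x ∉ N₀, ApproxLipschitzAt f x) :
    ∃ N : Set (Ec n), volume N = 0 ∧ ∀ x ∉ N, ApproxLipschitzAt f x := by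
  rcases n.eq_zero_or_pos with rfl | hn
  · refine ⟨∅, measure_empty, fun x _ => ⟨0, ?_⟩⟩
    have hempty : {y : Ec 0 | y ≠ x ∧ 0 * ‖y - x‖ ≤ ‖f y - f x‖} = ∅ :=
      eq_empty_of_forall_notMem fun y hy => hy.1 (Subsingleton.elim y x)
    rw [apSmall, hempty]
    simp
  · have : Nonempty (Fin n) := ⟨⟨0, hn⟩⟩
    exact ⟨N₀, hN₀.measure_zero _, h⟩

lemma ae_differentiableWithinAt_and_apSmall_compl {f : Ec n → Ec m} {S : Set (Ec n)}
    {K : ℝ≥0} (hS : MeasurableSet S) (hf : LipschitzOnWith K f S) :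
    ∀ᵐ x, x ∈ S → DifferentiableWithinAt ℝ f S x ∧ apSmall x Sᶜ := by
  filter_upwards [hf.ae_differentiableWithinAt_of_mem, ae_apSmall_of_notMem hS.compl]
    with x hdiff hdens hx using ⟨hdiff hx, hdens (not_not.2 hx)⟩

lemma addHaar_image_setOf_det_fderivWithin_eq_zero {E : Type*} [NormedAddCommGroup E]
    [NormedSpace ℝ E] [FiniteDimensional ℝ E] [MeasurableSpace E] [BorelSpace E]
    (μ : Measure E) [μ.IsAddHaarMeasure] {f : E → E} {S T : Set E} (hTS : T ⊆ S)
    (hf : ∀ x ∈ T, DifferentiableWithinAt ℝ f S x) :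
    μ (f '' {x ∈ T | (fderivWithin ℝ f S x).det = 0}) = 0 :=
  addHaar_image_eq_zero_of_det_fderivWithin_eq_zero μ
    (fun x hx => (hf x hx.1).hasFDerivWithinAt.mono ((sep_subset _ _).trans hTS)) fun _ hx => hx.2

end

/-- for `n = m`, if `f : ℝⁿ → ℝⁿ` is measurable and
`ap-limsup_{y→x} |f(y)-f(x)|/|y-x| < ∞` outside a countable set `N₀`, then `f` is
approximately differentiable of order 1 `Lⁿ`-a.e. (say on `D`, with approximate derivative
`F₁`), and the image under `f` of the approximate critical set
`{x ∈ D : det F₁(x) = 0}` has Lebesgue measure zero. -/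
theorem morse_sard_equidim {n : ℕ} (f : Ec n → Ec n) (hf : Measurable f)
    (N₀ : Set (Ec n)) (hN₀ : N₀.Countable)
    (h : ∀ x ∉ N₀, ∃ lam : ℝ,
      apSmall x {y | y ≠ x ∧ lam * ‖y - x‖ ≤ ‖f y - f x‖}) :
    ∃ (D : Set (Ec n)) (F₁ : Ec n → (Ec n →L[ℝ] Ec n)),
      volume Dᶜ = 0 ∧
      (∀ x ∈ D, ApproxDiff1 f x (F₁ x)) ∧
      volume (f '' {x ∈ D | LinearMap.det ((F₁ x : Ec n →L[ℝ] Ec n) : Ec n →ₗ[ℝ] Ec n) = 0}) = 0 := by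
  obtain ⟨N, hN, hfN⟩ := exists_null_forall_notMem_approxLipschitzAt hN₀ h
  obtain ⟨S, hSm, hSlip, hcover⟩ := exists_measurableSet_lipschitzOnWith_cover hf
  set G : ℕ × ℕ → Set (Ec n) := fun i =>
    {x ∈ S i | DifferentiableWithinAt ℝ f (S i) x ∧ apSmall x (S i)ᶜ}
  have hG : ∀ i, volume (S i \ G i) = 0 := fun i => by
    obtain ⟨K, hK⟩ := hSlip i
    have hae := ae_iff.1 (ae_differentiableWithinAt_and_apSmall_compl (hSm i) hK)
    refine measure_mono_null ?_ hae
    exact fun x hx hgood => hx.2 ⟨hx.1, hgood hx.1⟩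
  choose! piece hpiece using fun x (hx : x ∈ ⋃ i, G i) => mem_iUnion.1 hx
  refine ⟨⋃ i, G i, fun x => fderivWithin ℝ f (S (piece x)) x, ?_, fun x hx => ?_, ?_⟩
  · refine measure_mono_null (fun x hx => ?_)
      (measure_union_null hN (measure_iUnion_null hG))
    by_cases hxN : x ∈ N
    · exact Or.inl hxN
    obtain ⟨i, hi⟩ := hcover x (hfN x hxN)
    exact Or.inr (mem_iUnion.2 ⟨i, hi, fun hxG => hx (mem_iUnion.2 ⟨i, hxG⟩)⟩)
  · obtain ⟨-, hdiff, hdens⟩ := hpiece x hx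
    exact approxDiff1_of_hasFDerivWithinAt hdiff.hasFDerivWithinAt hdens
  · refine measure_mono_null ?_ (measure_iUnion_null fun i =>
      addHaar_image_setOf_det_fderivWithin_eq_zero volume (T := G i) (sep_subset _ _)
        fun x hx => hx.2.1)
    rintro _ ⟨x, ⟨hx, hdet⟩, rfl⟩
    exact mem_iUnion.2 ⟨piece x, x, ⟨hpiece x hx, hdet⟩, rfl⟩

end
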